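/- Let (R_i, t_i) be a perfectoid tower arising from (R_0, I_0). Fix i ≥ 0 and an ideal J_i ⊆ R_i containing I_0R_i. Suppose J and J' are ideals of R_{i+1} each satisfying the two conditions: its p-th power equals J_iR_{i+1}, and the preimage ideal F_i^{-1}(J_i·(R_i/I_0R_i)) equals its image ideal in R_{i+1}/I_0R_{i+1}. Then J = J'. -/

import Mathlib

/-! Both `J` and `J'` contain their `p`-th power `J_iR_{i+1} ⊇ I_0R_{i+1}`, and an ideal
containing `I_0R_{i+1}` is determined by its image in `R_{i+1}/I_0R_{i+1}`, which the second
condition identifies with `F_i^{-1}(J_i·(R_i/I_0R_i))` for both. -/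

set_option synthInstance.maxHeartbeats 1000000
set_option maxHeartbeats 1000000
universe u

namespace PaperTower

variable {R : ℕ → Type u} [∀ i, CommRing (R i)]

/-- The set of `J`-torsion elements of a commutative ring. -/
def torSet {A : Type*} [CommRing A] (J : Ideal A) : Set A :=
  {x | ∀ a ∈ J, ∃ n : ℕ, 0 < n ∧ a ^ n * x = 0}

/-- Cast ring homomorphism between quotients at equal indices. -/
def qcast (I : ∀ i, Ideal (R i)) {m n : ℕ} (h : m = n) :
    (R m ⧸ I m) →+* (R n ⧸ I n) := by subst h; exact RingHom.id _

/-- The `j`-th small tilt (inverse quasi-perfection) of a tower, as a subring of the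
product of the quotients, consisting of sequences compatible with the Frobenius
projections `F`. -/
def Tilt (I : ∀ i, Ideal (R i))
    (F : ∀ i, (R (i + 1) ⧸ I (i + 1)) →+* (R i ⧸ I i)) (j : ℕ) :
    Subring (∀ i, R (j + i) ⧸ I (j + i)) where
  carrier := {a | ∀ i, F (j + i) (a (i + 1)) = a i}
  zero_mem' := by
    intro i
    show F (j + i) 0 = 0
    simp
  one_mem' := by
    intro i
    show F (j + i) 1 = 1
    simp
  add_mem' := by
    intro a b ha hb i
    show F (j + i) (a (i + 1) + b (i + 1)) = a i + b i
    rw [map_add, ha i, hb i]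
  mul_mem' := by
    intro a b ha hb i
    show F (j + i) (a (i + 1) * b (i + 1)) = a i * b i
    rw [map_mul, ha i, hb i]
  neg_mem' := by
    intro a ha i
    show F (j + i) (-(a (i + 1))) = -(a i)
    rw [map_neg, ha i]

/-- The `m`-th projection `Φ^{(j)}_m` from the `j`-th small tilt. -/
def proj (I : ∀ i, Ideal (R i))
    (F : ∀ i, (R (i + 1) ⧸ I (i + 1)) →+* (R i ⧸ I i)) (j m : ℕ) :
    Tilt I F j →+* (R (j + m) ⧸ I (j + m)) :=
  (Pi.evalRingHom _ m).comp (Tilt I F j).subtype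

end PaperTower

namespace Ideal

variable {A B : Type*} [CommRing A] [CommRing B]

theorem map_le_of_pow_eq_map (f : A →+* B) {n : ℕ} (hn : n ≠ 0) {I J : Ideal A} (hIJ : I ≤ J)
    {K : Ideal B} (hK : K ^ n = J.map f) : I.map f ≤ K :=
  (map_mono hIJ).trans (hK ▸ pow_le_self hn)

theorem eq_of_le_of_map_quotientMk_eq {I K K' : Ideal A} (hK : I ≤ K) (hK' : I ≤ K')
    (h : K.map (Quotient.mk I) = K'.map (Quotient.mk I)) : K = K' := by
  rw [← comap_map_mk hK, h, comap_map_mk hK']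

end Ideal

namespace PaperTower

theorem stmt11 (p : ℕ) (hp : p.Prime)
    (R : ℕ → Type u) [∀ i, CommRing (R i)]
    (t : ∀ i, R i →+* R (i + 1))
    (I : ∀ i, Ideal (R i))
    (hIsucc : ∀ i, I (i + 1) = (I i).map (t i))
    (F : ∀ i, (R (i + 1) ⧸ I (i + 1)) →+* (R i ⧸ I i))
    (i : ℕ) (Ji : Ideal (R i)) (hJi : I i ≤ Ji)
    (J J' : Ideal (R (i + 1)))
    (hJpow : J ^ p = Ji.map (t i))
    (hJpre : Ideal.comap (F i) (Ji.map (Ideal.Quotient.mk (I i)))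
      = J.map (Ideal.Quotient.mk (I (i + 1))))
    (hJ'pow : J' ^ p = Ji.map (t i))
    (hJ'pre : Ideal.comap (F i) (Ji.map (Ideal.Quotient.mk (I i)))
      = J'.map (Ideal.Quotient.mk (I (i + 1)))) :
    J = J' := by
  have hIJ : I (i + 1) ≤ J := hIsucc i ▸ Ideal.map_le_of_pow_eq_map (t i) hp.ne_zero hJi hJpow
  have hIJ' : I (i + 1) ≤ J' := hIsucc i ▸ Ideal.map_le_of_pow_eq_map (t i) hp.ne_zero hJi hJ'pow
  exact Ideal.eq_of_le_of_map_quotientMk_eq hIJ hIJ' (hJpre.symm.trans hJ'pre)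

end PaperTower
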